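/- arXiv:1808.02578 — 3 statements merged into one kernel-verified Lean document; each statement's English description precedes it below -/
import Mathlib

section
/- Let E be a real normed vector space, let F, F̂ : E → E, let α, α̃ ≥ 0 and ζ, μ ≥ 0. Suppose F is Lipschitz with constant α, F̂ is Lipschitz with constant α̃, and ‖F̂(x) − F(x)‖ ≤ ζ for all x ∈ E. Let x, ν, ν̂ : ℕ → E be sequences with x_{j+1} = F(x_j) for all j, set y_j := x_j + ν_j, and suppose ‖ν̂_j − ν_j‖ ≤ μ for all j. Then for all natural numbers j and i, the i-step prediction error η_{j,i} := F̂^i(y_j − ν̂_j) + ν̂_{j+i} − y_{j+i} satisfies ‖η_{j,i}‖ ≤ ζ · ∑_{k=0}^{i−1} α^k + (α̃^i + 1) · μ. -/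
/-!
Split the prediction error as
`(F̂^i(y_j − ν̂_j) − F̂^i(x_j)) + (F̂^i(x_j) − F^i(x_j)) + (ν̂_{j+i} − ν_{j+i})`, using
`x_{j+i} = F^i(x_j)`. The first term is at most `α̃^i μ` because `F̂^i` is `α̃^i`-Lipschitz and
`y_j − ν̂_j − x_j = ν_j − ν̂_j`; the last is at most `μ`. For the middle term, one step of the
recursion `F̂(F̂^n x) − F(F^n x) = (F̂ − F)(F̂^n x) + (F(F̂^n x) − F(F^n x))` turns a bound `e_n` into
`ζ + α e_n`, which sums to `ζ ∑_{k<i} α^k`.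
-/

open Finset NNReal

theorem Function.eq_iterate_of_succ_eq {X : Type*} {F : X → X} {x : ℕ → X}
    (hx : ∀ j, x (j + 1) = F (x j)) (j i : ℕ) : x (j + i) = F^[i] (x j) := by
  induction i with
  | zero => rfl
  | succ n ih => rw [← add_assoc, hx, ih, Function.iterate_succ_apply']

theorem LipschitzWith.dist_iterate_le_of_dist_le {X : Type*} [PseudoMetricSpace X]
    {F G : X → X} {K : ℝ≥0} {ζ : ℝ} (hF : LipschitzWith K F) (hGF : ∀ x, dist (G x) (F x) ≤ ζ)
    (n : ℕ) (x : X) : dist (G^[n] x) (F^[n] x) ≤ ζ * ∑ k ∈ range n, (K : ℝ) ^ k := by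
  induction n with
  | zero => simp
  | succ n ih =>
    rw [Function.iterate_succ_apply', Function.iterate_succ_apply', geom_sum_succ]
    calc dist (G (G^[n] x)) (F (F^[n] x))
        ≤ dist (G (G^[n] x)) (F (G^[n] x)) + dist (F (G^[n] x)) (F (F^[n] x)) :=
          dist_triangle _ _ _
      _ ≤ ζ + K * (ζ * ∑ k ∈ range n, (K : ℝ) ^ k) :=
          add_le_add (hGF _) ((hF.dist_le_mul _ _).trans (by gcongr))
      _ = ζ * ((K : ℝ) * ∑ k ∈ range n, (K : ℝ) ^ k + 1) := by ring

theorem prediction_error_bound_general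
    {E : Type*} [NormedAddCommGroup E] [NormedSpace ℝ E]
    (F Fhat : E → E) (α alphat ζ μ : ℝ)
    (hα : 0 ≤ α) (halphat : 0 ≤ alphat)
    (hLipF : ∀ u v : E, ‖F u - F v‖ ≤ α * ‖u - v‖)
    (hLipFhat : ∀ u v : E, ‖Fhat u - Fhat v‖ ≤ alphat * ‖u - v‖)
    (happrox : ∀ x : E, ‖Fhat x - F x‖ ≤ ζ)
    (x ν nuhat : ℕ → E)
    (htraj : ∀ j : ℕ, x (j + 1) = F (x j))
    (hnoise : ∀ j : ℕ, ‖nuhat j - ν j‖ ≤ μ) :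
    ∀ j i : ℕ,
      ‖Fhat^[i] ((x j + ν j) - nuhat j) + nuhat (j + i) - (x (j + i) + ν (j + i))‖ ≤
        ζ * ∑ k ∈ Finset.range i, α ^ k + (alphat ^ i + 1) * μ := by
  intro j i
  have hF : LipschitzWith ⟨α, hα⟩ F :=
    .of_dist_le_mul fun u v => by rw [dist_eq_norm, dist_eq_norm]; exact hLipF u v
  have hFhat : LipschitzWith ⟨alphat, halphat⟩ Fhat :=
    .of_dist_le_mul fun u v => by rw [dist_eq_norm, dist_eq_norm]; exact hLipFhat u v
  have h_start : ‖Fhat^[i] (x j + ν j - nuhat j) - Fhat^[i] (x j)‖ ≤ alphat ^ i * μ := by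
    rw [← dist_eq_norm]
    refine ((hFhat.iterate i).dist_le_mul _ _).trans ?_
    rw [dist_eq_norm, show x j + ν j - nuhat j - x j = -(nuhat j - ν j) by abel, norm_neg]
    exact mul_le_mul_of_nonneg_left (hnoise j) (pow_nonneg halphat i)
  have h_model : ‖Fhat^[i] (x j) - F^[i] (x j)‖ ≤ ζ * ∑ k ∈ range i, α ^ k := by
    rw [← dist_eq_norm]
    exact hF.dist_iterate_le_of_dist_le (fun u => (dist_eq_norm _ _).trans_le (happrox u)) i (x j)
  calc _ = ‖(Fhat^[i] (x j + ν j - nuhat j) - Fhat^[i] (x j)) + (Fhat^[i] (x j) - F^[i] (x j))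
          + (nuhat (j + i) - ν (j + i))‖ := by
        rw [Function.eq_iterate_of_succ_eq htraj]; congr 1; abel
    _ ≤ alphat ^ i * μ + ζ * ∑ k ∈ range i, α ^ k + μ :=
        norm_add₃_le.trans (add_le_add_three h_start h_model (hnoise _))
    _ = _ := by ring

/-- Main error bound of Appendix A: the `i`-step prediction error satisfies
`‖η_{j,i}‖ ≤ ζ ∑_{k=0}^{i−1} α^k + (alphat^i + 1) μ`. -/
theorem prediction_error_bound
    {E : Type*} [NormedAddCommGroup E] [NormedSpace ℝ E]
    (F Fhat : E → E) (α alphat ζ μ : ℝ)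
    (hα : 0 ≤ α) (halphat : 0 ≤ alphat) (hζ : 0 ≤ ζ) (hμ : 0 ≤ μ)
    (hLipF : ∀ u v : E, ‖F u - F v‖ ≤ α * ‖u - v‖)
    (hLipFhat : ∀ u v : E, ‖Fhat u - Fhat v‖ ≤ alphat * ‖u - v‖)
    (happrox : ∀ x : E, ‖Fhat x - F x‖ ≤ ζ)
    (x ν nuhat : ℕ → E)
    (htraj : ∀ j : ℕ, x (j + 1) = F (x j))
    (hnoise : ∀ j : ℕ, ‖nuhat j - ν j‖ ≤ μ) :
    ∀ j i : ℕ,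
      ‖Fhat^[i] ((x j + ν j) - nuhat j) + nuhat (j + i) - (x (j + i) + ν (j + i))‖ ≤
        ζ * ∑ k ∈ Finset.range i, α ^ k + (alphat ^ i + 1) * μ :=
  prediction_error_bound_general F Fhat α alphat ζ μ hα halphat hLipF hLipFhat happrox x ν nuhat
    htraj hnoise
end

section
/- Let E be a real normed vector space, let F, F̂ : E → E, let α, α̃ ≥ 0 and ζ, μ ≥ 0. Suppose F is Lipschitz with constant α, F̂ is Lipschitz with constant α̃, and ‖F̂(x) − F(x)‖ ≤ ζ for all x ∈ E. Let x, ν, ν̂ : ℕ → E be sequences with x_{j+1} = F(x_j) for all j, set y_j := x_j + ν_j, and suppose ‖ν̂_j − ν_j‖ ≤ μ for all j. Set ρ := 2 · max(α, α̃, 1). Then for all natural numbers j and i, the i-step prediction error η_{j,i} := F̂^i(y_j − ν̂_j) + ν̂_{j+i} − y_{j+i} satisfies ‖η_{j,i}‖ ≤ (ζ + 2μ) · ρ^i; in particular the prediction error grows at most exponentially in the number of timesteps i. -/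
/-- Exponential-growth bound on the `i`-step prediction error: with
`ρ := 2 max(α, alphat, 1)`, one has `‖η_{j,i}‖ ≤ (ζ + 2μ) ρ^i`. -/
theorem prediction_error_exponential_bound
    {E : Type*} [NormedAddCommGroup E] [NormedSpace ℝ E]
    (F Fhat : E → E) (α alphat ζ μ : ℝ)
    (hα : 0 ≤ α) (halphat : 0 ≤ alphat) (hζ : 0 ≤ ζ) (hμ : 0 ≤ μ)
    (hLipF : ∀ u v : E, ‖F u - F v‖ ≤ α * ‖u - v‖)
    (hLipFhat : ∀ u v : E, ‖Fhat u - Fhat v‖ ≤ alphat * ‖u - v‖)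
    (happrox : ∀ x : E, ‖Fhat x - F x‖ ≤ ζ)
    (x ν nuhat : ℕ → E)
    (htraj : ∀ j : ℕ, x (j + 1) = F (x j))
    (hnoise : ∀ j : ℕ, ‖nuhat j - ν j‖ ≤ μ) :
    ∀ j i : ℕ,
      ‖Fhat^[i] ((x j + ν j) - nuhat j) + nuhat (j + i) - (x (j + i) + ν (j + i))‖ ≤
        (ζ + 2 * μ) * (2 * max α (max alphat 1)) ^ i := by
  intro j i
  set ρ : ℝ := 2 * max α (max alphat 1) with hρ
  have hρ2 : 2 ≤ ρ := by
    have : (1 : ℝ) ≤ max α (max alphat 1) := le_max_of_le_right (le_max_right _ _)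
    linarith
  have hρ0 : 0 ≤ ρ := by linarith
  have hαρ : 2 * alphat ≤ ρ := by
    have : alphat ≤ max α (max alphat 1) := le_max_of_le_right (le_max_left _ _)
    linarith
  have key : ∀ i : ℕ,
      ‖Fhat^[i] ((x j + ν j) - nuhat j) - x (j + i)‖ + μ ≤ (ζ + 2 * μ) * ρ ^ i := by
    intro i
    induction i with
    | zero =>
      simp only [Function.iterate_zero, id_eq, Nat.add_zero, pow_zero, mul_one]
      have : (x j + ν j) - nuhat j - x j = -(nuhat j - ν j) := by abel
      rw [this, norm_neg]
      have := hnoise j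
      linarith
    | succ i ih =>
      have hpow : (1 : ℝ) ≤ ρ ^ i := one_le_pow₀ (by linarith)
      set a := Fhat^[i] ((x j + ν j) - nuhat j) with ha
      have hiter : Fhat^[i + 1] ((x j + ν j) - nuhat j) = Fhat a :=
        Function.iterate_succ_apply' Fhat i _
      have hx : x (j + (i + 1)) = F (x (j + i)) := by
        rw [← Nat.add_assoc]; exact htraj (j + i)
      rw [hiter, hx]
      have h1 : ‖Fhat a - F (x (j + i))‖ ≤ alphat * ‖a - x (j + i)‖ + ζ := by
        have h2 : Fhat a - F (x (j + i)) =
            (Fhat a - Fhat (x (j + i))) + (Fhat (x (j + i)) - F (x (j + i))) := by abel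
        calc ‖Fhat a - F (x (j + i))‖
            ≤ ‖Fhat a - Fhat (x (j + i))‖ + ‖Fhat (x (j + i)) - F (x (j + i))‖ := by
              rw [h2]; exact norm_add_le _ _
          _ ≤ alphat * ‖a - x (j + i)‖ + ζ :=
              add_le_add (hLipFhat _ _) (happrox _)
      have he0 : (0 : ℝ) ≤ ‖a - x (j + i)‖ := norm_nonneg _
      have hpowsucc : ρ ^ (i + 1) = ρ * ρ ^ i := pow_succ' ρ i
      rw [hpowsucc]
      nlinarith [mul_le_mul_of_nonneg_right hαρ he0]
  have hsplit : Fhat^[i] ((x j + ν j) - nuhat j) + nuhat (j + i) - (x (j + i) + ν (j + i)) =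
      (Fhat^[i] ((x j + ν j) - nuhat j) - x (j + i)) + (nuhat (j + i) - ν (j + i)) := by abel
  calc ‖Fhat^[i] ((x j + ν j) - nuhat j) + nuhat (j + i) - (x (j + i) + ν (j + i))‖
      ≤ ‖Fhat^[i] ((x j + ν j) - nuhat j) - x (j + i)‖ + ‖nuhat (j + i) - ν (j + i)‖ := by
        rw [hsplit]; exact norm_add_le _ _
    _ ≤ (ζ + 2 * μ) * ρ ^ i := by
        have := key i
        have := hnoise (j + i)
        linarith
end

section
/- Let E be a real normed vector space and let F, F̂ : E → E be bijections. Let β, β̃ ≥ 0 and ζ, μ ≥ 0, and suppose the inverse F⁻¹ is Lipschitz with constant β, the inverse F̂⁻¹ is Lipschitz with constant β̃, and ‖F̂⁻¹(x) − F⁻¹(x)‖ ≤ ζ for all x ∈ E. Let x : ℤ → E, ν : ℤ → E, ν̂ : ℤ → E be sequences with x_{j+1} = F(x_j) for all j ∈ ℤ, set y_j := x_j + ν_j, and suppose ‖ν̂_j − ν_j‖ ≤ μ for all j. Then for all j ∈ ℤ and all natural numbers i, the backward i-step prediction error satisfies ‖(F̂⁻¹)^i(y_j − ν̂_j) + ν̂_{j−i}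 − y_{j−i}‖ ≤ ζ · ∑_{k=0}^{i−1} β^k + (β̃^i + 1) · μ. -/
/-! The error splits into three pieces: the noise-estimation error at time `j`, propagated by
`(F̂⁻¹)^i` and hence amplified by at most `β̃^i`; the model error of `(F̂⁻¹)^i` against the true
backward orbit `x_{j-i} = (F⁻¹)^i x_j`, which accumulates as a geometric sum in `β`; and the
noise-estimation error at time `j - i`. -/

open Finset NNReal

lemma dist_iterate_le_mul_geom_sum {α : Type*} [PseudoMetricSpace α] {f g : α → α} {K : ℝ≥0}
    {ζ : ℝ} (hg : LipschitzWith K g) (hfg : ∀ u, dist (f u) (g u) ≤ ζ) (a : α) (n : ℕ) :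
    dist (f^[n] a) (g^[n] a) ≤ ζ * ∑ k ∈ range n, (K : ℝ) ^ k := by
  induction n with
  | zero => simp
  | succ n ih =>
    rw [Function.iterate_succ_apply', Function.iterate_succ_apply']
    calc dist (f (f^[n] a)) (g (g^[n] a))
        ≤ dist (f (f^[n] a)) (g (f^[n] a)) + dist (g (f^[n] a)) (g (g^[n] a)) :=
          dist_triangle _ _ _
      _ ≤ ζ + K * (ζ * ∑ k ∈ range n, (K : ℝ) ^ k) :=
          add_le_add (hfg _) ((hg.dist_le_mul _ _).trans (mul_le_mul_of_nonneg_left ih K.2))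
      _ = ζ * ∑ k ∈ range (n + 1), (K : ℝ) ^ k := by rw [geom_sum_succ]; ring

lemma Equiv.iterate_symm_apply_of_orbit {α : Type*} (F : α ≃ α) {x : ℤ → α}
    (hx : ∀ j, x (j + 1) = F (x j)) (j : ℤ) (n : ℕ) : F.symm^[n] (x j) = x (j - n) := by
  induction n with
  | zero => simp
  | succ n ih =>
    rw [Function.iterate_succ_apply', ih, F.symm_apply_eq, ← hx]
    congr 1
    push_cast
    ring

theorem backward_prediction_error_bound_general
    {E : Type*} [NormedAddCommGroup E] [NormedSpace ℝ E]
    (F Fhat : E ≃ E) (β betat ζ μ : ℝ)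
    (hβ : 0 ≤ β) (hbetat : 0 ≤ betat)
    (hLipFinv : ∀ u v : E, ‖F.symm u - F.symm v‖ ≤ β * ‖u - v‖)
    (hLipFhatinv : ∀ u v : E, ‖Fhat.symm u - Fhat.symm v‖ ≤ betat * ‖u - v‖)
    (happrox : ∀ x : E, ‖Fhat.symm x - F.symm x‖ ≤ ζ)
    (x ν nuhat : ℤ → E)
    (htraj : ∀ j : ℤ, x (j + 1) = F (x j))
    (hnoise : ∀ j : ℤ, ‖nuhat j - ν j‖ ≤ μ) :
    ∀ (j : ℤ) (i : ℕ),
      ‖(⇑Fhat.symm)^[i] ((x j + ν j) - nuhat j) + nuhat (j - i) - (x (j - i) + ν (j - i))‖ ≤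
        ζ * ∑ k ∈ Finset.range i, β ^ k + (betat ^ i + 1) * μ := by
  intro j i
  lift β to ℝ≥0 using hβ
  lift betat to ℝ≥0 using hbetat
  set G := (⇑Fhat.symm)^[i]
  have hpropagated : ‖G (x j + ν j - nuhat j) - G (x j)‖ ≤ betat ^ i * μ :=
    calc ‖G (x j + ν j - nuhat j) - G (x j)‖
        ≤ betat ^ i * ‖x j + ν j - nuhat j - x j‖ := by
          simpa only [NNReal.coe_pow] using
            ((lipschitzWith_iff_norm_sub_le.mpr hLipFhatinv).iterate i).norm_sub_le _ _
      _ = betat ^ i * ‖nuhat j - ν j‖ := by rw [← norm_neg]; congr 3; abel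
      _ ≤ betat ^ i * μ := by gcongr; exact hnoise j
  have hmodel : ‖G (x j) - x (j - i)‖ ≤ ζ * ∑ k ∈ range i, (β : ℝ) ^ k := by
    rw [← F.iterate_symm_apply_of_orbit htraj, ← dist_eq_norm]
    exact dist_iterate_le_mul_geom_sum (lipschitzWith_iff_norm_sub_le.mpr hLipFinv)
      (fun u => (dist_eq_norm _ _).trans_le (happrox u)) _ _
  calc ‖G (x j + ν j - nuhat j) + nuhat (j - i) - (x (j - i) + ν (j - i))‖
      = ‖(G (x j + ν j - nuhat j) - G (x j)) + (G (x j) - x (j - i))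
          + (nuhat (j - i) - ν (j - i))‖ := by congr 1; abel
    _ ≤ betat ^ i * μ + ζ * ∑ k ∈ range i, (β : ℝ) ^ k + μ :=
        norm_add₃_le.trans (add_le_add (add_le_add hpropagated hmodel) (hnoise _))
    _ = ζ * ∑ k ∈ range i, (β : ℝ) ^ k + (betat ^ i + 1) * μ := by ring

/-- Backward-in-time analogue of the multi-step prediction-error bound, using the
inverse flow maps: for bijections `F`, `Fhat` with Lipschitz inverses,
`‖(Fhat⁻¹)^i(y_j − nuhat_j) + nuhat_{j−i} − y_{j−i}‖ ≤ ζ ∑_{k=0}^{i−1} β^k + (betat^i + 1) μ`. -/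
theorem backward_prediction_error_bound
    {E : Type*} [NormedAddCommGroup E] [NormedSpace ℝ E]
    (F Fhat : E ≃ E) (β betat ζ μ : ℝ)
    (hβ : 0 ≤ β) (hbetat : 0 ≤ betat) (hζ : 0 ≤ ζ) (hμ : 0 ≤ μ)
    (hLipFinv : ∀ u v : E, ‖F.symm u - F.symm v‖ ≤ β * ‖u - v‖)
    (hLipFhatinv : ∀ u v : E, ‖Fhat.symm u - Fhat.symm v‖ ≤ betat * ‖u - v‖)
    (happrox : ∀ x : E, ‖Fhat.symm x - F.symm x‖ ≤ ζ)
    (x ν nuhat : ℤ → E)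
    (htraj : ∀ j : ℤ, x (j + 1) = F (x j))
    (hnoise : ∀ j : ℤ, ‖nuhat j - ν j‖ ≤ μ) :
    ∀ (j : ℤ) (i : ℕ),
      ‖(⇑Fhat.symm)^[i] ((x j + ν j) - nuhat j) + nuhat (j - i) - (x (j - i) + ν (j - i))‖ ≤
        ζ * ∑ k ∈ Finset.range i, β ^ k + (betat ^ i + 1) * μ :=
  backward_prediction_error_bound_general F Fhat β betat ζ μ hβ hbetat hLipFinv hLipFhatinv happrox
    x ν nuhat htraj hnoise
end
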